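/- (Local non-constancy) Suppose Θ ⊂ ℝ² is open and connected, x: Θ → [0,1] is a non-constant allocation with the monotonicity property that (α,β) ≥ (α',β') componentwise implies x(α,β) ≥ x(α',β'). Then there exists a point (α^a,β^a) ∈ Θ such that either x(α^a+δ, β^a+δ) > x(α^a,β^a) for all sufficiently small δ > 0, or x(α^a+δ, β^a+δ) < x(α^a,β^a) for all sufficiently small δ < 0. -/

import Mathlib

/-!
If the allocation were nowhere strictly monotone along the diagonal, monotonicity would squeeze it
to be constant on the box spanned by two diagonal translates on either side of each point, and that
box is a neighbourhood of the point. A locally constant function on a connected set is constant.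
-/

open Set Filter Topology Metric

theorem IsPreconnected.apply_eq_of_eventually_eq {X Y : Type*} [TopologicalSpace X] {s : Set X}
    (hs : IsPreconnected s) {f : X → Y} (hf : ∀ a ∈ s, ∀ᶠ p in 𝓝 a, f p = f a)
    {a b : X} (ha : a ∈ s) (hb : b ∈ s) : f a = f b := by
  have := isPreconnected_iff_preconnectedSpace.1 hs
  have hloc : IsLocallyConstant fun p : s => f p :=
    (IsLocallyConstant.iff_eventually_eq _).2 fun p =>
      (continuous_subtype_val.tendsto p).eventually (hf p p.2)
  exact hloc.apply_eq_of_preconnectedSpace ⟨a, ha⟩ ⟨b, hb⟩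

theorem MonotoneOn.eq_of_mem_Icc {α β : Type*} [Preorder α] [PartialOrder β] {f : α → β}
    {s : Set α} (hf : MonotoneOn f s) {a b : α} (hs : Icc a b ⊆ s) (hab : f a = f b) {p : α}
    (hp : p ∈ Icc a b) : f p = f a := by
  have ha : a ∈ s := hs ⟨le_rfl, hp.1.trans hp.2⟩
  have hb : b ∈ s := hs ⟨hp.1.trans hp.2, le_rfl⟩
  exact le_antisymm (hab ▸ hf (hs hp) hb hp.2) (hf ha (hs hp) hp.1)

theorem Icc_mem_nhds_prod {α β : Type*} [TopologicalSpace α] [LinearOrder α]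
    [OrderClosedTopology α] [TopologicalSpace β] [LinearOrder β] [OrderClosedTopology β]
    {a b θ : α × β} (ha₁ : a.1 < θ.1) (ha₂ : a.2 < θ.2) (hb₁ : θ.1 < b.1) (hb₂ : θ.2 < b.2) :
    Icc a b ∈ 𝓝 θ := by
  rw [Icc_prod_eq, nhds_prod_eq]
  exact prod_mem_prod (Icc_mem_nhds ha₁ hb₁) (Icc_mem_nhds ha₂ hb₂)

theorem exists_Icc_diag_subset_of_mem_nhds {Θ : Set (ℝ × ℝ)} {θ : ℝ × ℝ} (hΘ : Θ ∈ 𝓝 θ) :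
    ∃ ε > 0, Icc (θ.1 - ε, θ.2 - ε) (θ.1 + ε, θ.2 + ε) ⊆ Θ := by
  obtain ⟨ε, hε, hsub⟩ := nhds_basis_closedBall.mem_iff.1 hΘ
  refine ⟨ε, hε, ?_⟩
  rwa [← Icc_prod_Icc, ← Real.closedBall_eq_Icc, ← Real.closedBall_eq_Icc, closedBall_prod_same]

theorem MonotoneOn.eventually_eq_of_forall_diag {Θ : Set (ℝ × ℝ)} {x : ℝ × ℝ → ℝ}
    (hx : MonotoneOn x Θ) {θ : ℝ × ℝ} (hΘ : Θ ∈ 𝓝 θ)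
    (hup : ∀ ε > 0, ∃ δ, 0 < δ ∧ δ < ε ∧
      ((θ.1 + δ, θ.2 + δ) ∈ Θ → x (θ.1 + δ, θ.2 + δ) ≤ x θ))
    (hdown : ∀ ε > 0, ∃ δ, -ε < δ ∧ δ < 0 ∧
      ((θ.1 + δ, θ.2 + δ) ∈ Θ → x θ ≤ x (θ.1 + δ, θ.2 + δ))) :
    ∀ᶠ p in 𝓝 θ, x p = x θ := by
  obtain ⟨ε, hε, hbox⟩ := exists_Icc_diag_subset_of_mem_nhds hΘ
  obtain ⟨δp, hδp, hδpε, hp⟩ := hup ε hε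
  obtain ⟨δn, hδnε, hδn, hn⟩ := hdown ε hε
  have hsub : Icc (θ.1 + δn, θ.2 + δn) (θ.1 + δp, θ.2 + δp) ⊆ Θ :=
    (Icc_subset_Icc (by constructor <;> dsimp only <;> linarith)
      (by constructor <;> dsimp only <;> linarith)).trans hbox
  have hθ : θ ∈ Icc (θ.1 + δn, θ.2 + δn) (θ.1 + δp, θ.2 + δp) :=
    ⟨by constructor <;> dsimp only <;> linarith, by constructor <;> dsimp only <;> linarith⟩
  have hθΘ := hsub hθ
  have hpΘ := hsub (right_mem_Icc.2 (hθ.1.trans hθ.2))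
  have hnΘ := hsub (left_mem_Icc.2 (hθ.1.trans hθ.2))
  have hxp : x (θ.1 + δp, θ.2 + δp) = x θ := le_antisymm (hp hpΘ) (hx hθΘ hpΘ hθ.2)
  have hxn : x (θ.1 + δn, θ.2 + δn) = x θ := le_antisymm (hx hnΘ hθΘ hθ.1) (hn hnΘ)
  filter_upwards [Icc_mem_nhds_prod (a := (θ.1 + δn, θ.2 + δn)) (b := (θ.1 + δp, θ.2 + δp))
    (by dsimp only; linarith) (by dsimp only; linarith) (by dsimp only; linarith)
    (by dsimp only; linarith)] with q hq
  exact (hx.eq_of_mem_Icc hsub (hxn.trans hxp.symm) hq).trans hxn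

theorem stmt12_general
    (Θ : Set (ℝ × ℝ)) (hΘopen : IsOpen Θ) (hΘconn : IsConnected Θ)
    (x : ℝ × ℝ → ℝ)
    (hmono : ∀ θ ∈ Θ, ∀ θ' ∈ Θ, θ'.1 ≤ θ.1 → θ'.2 ≤ θ.2 → x θ' ≤ x θ)
    (hnc : ∃ θ1 ∈ Θ, ∃ θ2 ∈ Θ, x θ1 ≠ x θ2) :
    ∃ θ ∈ Θ,
      (∃ ε > 0, ∀ δ : ℝ, 0 < δ → δ < ε →
        (θ.1 + δ, θ.2 + δ) ∈ Θ ∧ x θ < x (θ.1 + δ, θ.2 + δ)) ∨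
      (∃ ε > 0, ∀ δ : ℝ, -ε < δ → δ < 0 →
        (θ.1 + δ, θ.2 + δ) ∈ Θ ∧ x (θ.1 + δ, θ.2 + δ) < x θ) := by
  by_contra! hflat
  obtain ⟨θ1, hθ1, θ2, hθ2, hne⟩ := hnc
  have hx : MonotoneOn x Θ := fun θ' hθ' θ hθ hle => hmono θ hθ θ' hθ' hle.1 hle.2
  refine hne (hΘconn.isPreconnected.apply_eq_of_eventually_eq (fun θ hθ => ?_) hθ1 hθ2)
  exact hx.eventually_eq_of_forall_diag (hΘopen.mem_nhds hθ) (hflat θ hθ).1 (hflat θ hθ).2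

/-- Local non-constancy: a non-constant, componentwise monotone allocation
on an open connected set is locally non-constant along the diagonal at some point. -/
theorem stmt12
    (Θ : Set (ℝ × ℝ)) (hΘopen : IsOpen Θ) (hΘconn : IsConnected Θ)
    (x : ℝ × ℝ → ℝ)
    (hxrange : ∀ θ ∈ Θ, x θ ∈ Icc (0:ℝ) 1)
    (hmono : ∀ θ ∈ Θ, ∀ θ' ∈ Θ, θ'.1 ≤ θ.1 → θ'.2 ≤ θ.2 → x θ' ≤ x θ)
    (hnc : ∃ θ1 ∈ Θ, ∃ θ2 ∈ Θ, x θ1 ≠ x θ2) :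
    ∃ θ ∈ Θ,
      (∃ ε > 0, ∀ δ : ℝ, 0 < δ → δ < ε →
        (θ.1 + δ, θ.2 + δ) ∈ Θ ∧ x θ < x (θ.1 + δ, θ.2 + δ)) ∨
      (∃ ε > 0, ∀ δ : ℝ, -ε < δ → δ < 0 →
        (θ.1 + δ, θ.2 + δ) ∈ Θ ∧ x (θ.1 + δ, θ.2 + δ) < x θ) :=
  stmt12_general Θ hΘopen hΘconn x hmono hnc
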